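/- arXiv:0912.0667 — 2 statements merged into one kernel-verified Lean document; each statement's English description precedes it below -/
import Mathlib

section
/- Let G be a group with exactly two non-nilpotent subgroups G and K, where G' < K. Then the quotient G/G'' also has exactly two non-nilpotent subgroups, namely G/G'' and K/G''. -/
/-!
`G'` is a proper subgroup of `K`, hence nilpotent, and `G'' = [G', G']`. If `K/G''` were
nilpotent, P. Hall's criterion (a group with a nilpotent normal subgroup `N` such that the
quotient by `N'` is nilpotent is itself nilpotent), applied inside `K` to `G'`, would make `K`
nilpotent. So `K/G''`, and with it `G/G''`, is not nilpotent; and a non-nilpotent subgroup of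
`G/G''` pulls back to a non-nilpotent subgroup of `G`, that is to `G` or to `K`.

Hall's criterion rests on the three subgroups lemma, which gives
`[[A, B], ₙ G] ≤ ∏_{i+j=n} [[A, ᵢ G], [B, ⱼ G]]` for normal `A`, `B`. If `[N, ₑ G] ≤ N'`, this
yields `[γᵢ(N), ₖ G] ≤ γᵢ₊₁(N)` for `k = i e`, so every `γᵢ(N)`, and in the end `1`, contains a
term of the lower central series of `G`.
-/

def ExactlyTwoNonNilpotent {G : Type*} [Group G] (K : Subgroup G) : Prop :=
  ¬ Group.IsNilpotent G ∧ K < ⊤ ∧ ¬ Group.IsNilpotent ↥K ∧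
    ∀ H : Subgroup G, ¬ Group.IsNilpotent ↥H → H = ⊤ ∨ H = K

instance derivedSeriesNormal {G : Type*} [Group G] (n : ℕ) : (derivedSeries G n).Normal :=
  derivedSeries_normal G n

namespace Subgroup

variable {G : Type*} [Group G]

theorem commutator_le_iff_le_comap_centralizer {H L M : Subgroup G} [M.Normal] :
    ⁅H, L⁆ ≤ M ↔
      H ≤ (centralizer (L.map (QuotientGroup.mk' M))).comap (QuotientGroup.mk' M) := by
  rw [← map_le_iff_le_comap, ← commutator_eq_bot_iff_le_centralizer, ← map_commutator,
    map_eq_bot_iff, QuotientGroup.ker_mk']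

theorem commutator_iSup_le {ι : Sort*} {H : ι → Subgroup G} {L M : Subgroup G} [M.Normal]
    (h : ∀ i, ⁅H i, L⁆ ≤ M) : ⁅⨆ i, H i, L⁆ ≤ M := by
  simp only [commutator_le_iff_le_comap_centralizer] at h ⊢
  exact iSup_le h

theorem commutator_commutator_le_of_rotate {H₁ H₂ H₃ M : Subgroup G} [M.Normal]
    (h1 : ⁅⁅H₂, H₃⁆, H₁⁆ ≤ M) (h2 : ⁅⁅H₃, H₁⁆, H₂⁆ ≤ M) : ⁅⁅H₁, H₂⁆, H₃⁆ ≤ M := by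
  have hle : ∀ X : Subgroup G, X ≤ M ↔ X.map (QuotientGroup.mk' M) = ⊥ := fun X => by
    rw [map_eq_bot_iff, QuotientGroup.ker_mk']
  simp only [hle, map_commutator] at h1 h2 ⊢
  exact commutator_commutator_eq_bot_of_rotate h1 h2

theorem commutator_commutator_top_le (A B : Subgroup G) [A.Normal] [B.Normal] :
    ⁅⁅A, B⁆, (⊤ : Subgroup G)⁆ ≤ ⁅⁅A, (⊤ : Subgroup G)⁆, B⁆ ⊔ ⁅A, ⁅B, (⊤ : Subgroup G)⁆⁆ := by
  apply commutator_commutator_le_of_rotate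
  · rw [commutator_comm]; exact le_sup_right
  · rw [commutator_comm ⊤ A]; exact le_sup_left

/-- `[A, ₙ G]`. -/
def iteratedCommutator (A : Subgroup G) : ℕ → Subgroup G
  | 0 => A
  | n + 1 => ⁅iteratedCommutator A n, ⊤⁆

variable (A B : Subgroup G)

@[simp]
theorem iteratedCommutator_zero : A.iteratedCommutator 0 = A := rfl

@[simp]
theorem iteratedCommutator_succ (n : ℕ) :
    A.iteratedCommutator (n + 1) = ⁅A.iteratedCommutator n, ⊤⁆ := rfl

instance iteratedCommutator_normal [A.Normal] (n : ℕ) : (A.iteratedCommutator n).Normal := by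
  induction n with
  | zero => assumption
  | succ n _ => rw [iteratedCommutator_succ]; infer_instance

theorem iteratedCommutator_antitone [A.Normal] : Antitone A.iteratedCommutator :=
  antitone_nat_of_succ_le fun _ => commutator_le_left _ _

variable {A B} in
theorem iteratedCommutator_mono (h : A ≤ B) (n : ℕ) :
    A.iteratedCommutator n ≤ B.iteratedCommutator n := by
  induction n with
  | zero => exact h
  | succ n ih => exact commutator_mono ih le_rfl

theorem iteratedCommutator_add (m n : ℕ) :
    A.iteratedCommutator (m + n) = (A.iteratedCommutator m).iteratedCommutator n := by
  induction n with
  | zero => rfl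
  | succ n ih => rw [← add_assoc, iteratedCommutator_succ, ih, iteratedCommutator_succ]

theorem iteratedCommutator_top (n : ℕ) :
    (⊤ : Subgroup G).iteratedCommutator n = (⊤ : Subgroup G).lowerCentralSeries n := by
  induction n with
  | zero => rfl
  | succ n ih => rw [iteratedCommutator_succ, ih, lowerCentralSeries_succ]

theorem iteratedCommutator_le_lowerCentralSeries (n : ℕ) :
    A.iteratedCommutator n ≤ (⊤ : Subgroup G).lowerCentralSeries n :=
  iteratedCommutator_top (G := G) n ▸ iteratedCommutator_mono le_top n

theorem iteratedCommutator_commutator_le [A.Normal] [B.Normal] (n : ℕ) :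
    ⁅A, B⁆.iteratedCommutator n ≤
      ⨆ j : Fin (n + 1), ⁅A.iteratedCommutator j, B.iteratedCommutator (n - j)⁆ := by
  induction n with
  | zero => exact le_iSup_of_le 0 le_rfl
  | succ n ih =>
    refine (commutator_mono ih le_rfl).trans (commutator_iSup_le fun j => ?_)
    have hj : (j : ℕ) ≤ n := Nat.lt_succ_iff.mp j.2
    refine (commutator_commutator_top_le _ _).trans (sup_le ?_ ?_)
    · refine le_iSup_of_le j.succ (le_of_eq ?_)
      rw [Fin.val_succ, Nat.succ_sub_succ, iteratedCommutator_succ]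
    · refine le_iSup_of_le j.castSucc (le_of_eq ?_)
      rw [Fin.val_castSucc, Nat.sub_add_comm hj, iteratedCommutator_succ]

theorem lowerCentralSeries_commutator_le (N : Subgroup G) [N.Normal] (i : ℕ) :
    ⁅N.lowerCentralSeries i, ⁅N, N⁆⁆ ≤ N.lowerCentralSeries (i + 2) := by
  rw [commutator_comm]
  apply commutator_commutator_le_of_rotate
  · rw [commutator_comm N]; rfl
  · rfl

variable {N : Subgroup G} [N.Normal]

theorem iteratedCommutator_lowerCentralSeries_le {e : ℕ} (he : N.iteratedCommutator e ≤ ⁅N, N⁆)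
    (i : ℕ) : (N.lowerCentralSeries i).iteratedCommutator ((i + 1) * e) ≤
      N.lowerCentralSeries (i + 1) := by
  induction i with
  | zero => simpa using he
  | succ i ih =>
    refine (iteratedCommutator_commutator_le _ _ _).trans (iSup_le fun j => ?_)
    by_cases hj : (i + 1) * e ≤ j
    · exact commutator_mono ((iteratedCommutator_antitone _ hj).trans ih)
        (iteratedCommutator_antitone _ (Nat.zero_le _))
    · refine (commutator_mono (iteratedCommutator_antitone _ (Nat.zero_le j))
        ((iteratedCommutator_antitone N ?_).trans he)).trans
          (lowerCentralSeries_commutator_le N i)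
      have : (i + 1 + 1) * e = (i + 1) * e + e := by ring
      omega

theorem isNilpotent_of_ker_le_commutator {Q : Type*} [Group Q] (hN : Group.IsNilpotent N)
    (f : G →* Q) (hf : f.ker ≤ ⁅N, N⁆) (hQ : Group.IsNilpotent f.range) :
    Group.IsNilpotent G := by
  obtain ⟨e, he⟩ := (isNilpotent_iff_lowerCentralSeries _).mp hQ
  have hGe : (⊤ : Subgroup G).lowerCentralSeries e ≤ ⁅N, N⁆ := by
    refine le_trans ?_ hf
    rw [← map_eq_bot_iff, map_lowerCentralSeries, ← MonoidHom.range_eq_map, he]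
  have hNe : N.iteratedCommutator e ≤ ⁅N, N⁆ :=
    (iteratedCommutator_le_lowerCentralSeries N e).trans hGe
  have hlcs : ∀ i, ∃ m, (⊤ : Subgroup G).lowerCentralSeries m ≤ N.lowerCentralSeries i := by
    intro i
    induction i with
    | zero => exact ⟨e, hGe.trans (commutator_le_left N N)⟩
    | succ i ih =>
      obtain ⟨m, hm⟩ := ih
      refine ⟨m + (i + 1) * e, ?_⟩
      rw [← iteratedCommutator_top, iteratedCommutator_add, iteratedCommutator_top]
      exact (iteratedCommutator_mono hm _).trans
        (iteratedCommutator_lowerCentralSeries_le hNe i)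
  obtain ⟨c, hc⟩ := (isNilpotent_iff_lowerCentralSeries N).mp hN
  obtain ⟨m, hm⟩ := hlcs c
  exact nilpotent_iff_lowerCentralSeries.mpr ⟨m, le_bot_iff.mp (hc ▸ hm)⟩

theorem isNilpotent_of_isNilpotent_map {K : Subgroup G} (hNK : N ≤ K)
    (hN : Group.IsNilpotent N) (hK : Group.IsNilpotent (K.map (QuotientGroup.mk' ⁅N, N⁆))) :
    Group.IsNilpotent K := by
  refine isNilpotent_of_ker_le_commutator (N := N.subgroupOf K)
    ((Group.isNilpotent_congr (subgroupOfEquivOfLe hNK)).mpr hN)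
    ((QuotientGroup.mk' ⁅N, N⁆).comp K.subtype) ?_ (by rwa [MonoidHom.range_comp, range_subtype])
  rw [← map_le_map_iff_of_injective K.subtype_injective, map_commutator,
    map_subgroupOf_eq_of_le hNK, ← MonoidHom.comap_ker, QuotientGroup.ker_mk']
  exact (subgroupOf_map_subtype _ _).trans_le inf_le_left

variable {Q : Type*} [Group Q]

theorem map_lt_top_of_ker_le {f : G →* Q} {K : Subgroup G} (hK : K < ⊤) (hker : f.ker ≤ K) :
    K.map f < ⊤ := by
  refine lt_top_iff_ne_top.mpr fun htop => hK.ne ?_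
  rw [← sup_eq_left.mpr hker, ← comap_map_eq, htop, comap_top]

theorem eq_top_or_eq_map_of_not_isNilpotent {f : G →* Q} (hf : Function.Surjective f)
    {K : Subgroup G} (hG : ∀ H : Subgroup G, ¬ Group.IsNilpotent H → H = ⊤ ∨ H = K)
    {H : Subgroup Q} (hH : ¬ Group.IsNilpotent H) : H = ⊤ ∨ H = K.map f := by
  rw [← map_comap_eq_self_of_surjective hf H] at hH ⊢
  have hH' : ¬ Group.IsNilpotent (H.comap f) := fun _ =>
    hH (Group.nilpotent_of_surjective (f.subgroupMap _) (f.subgroupMap_surjective _))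
  rcases hG _ hH' with h | h
  · exact .inl (h ▸ map_top_of_surjective f hf)
  · exact .inr (h ▸ rfl)

end Subgroup

theorem ExactlyTwoNonNilpotent.isNilpotent_of_lt {G : Type*} [Group G] {K H : Subgroup G}
    (h : ExactlyTwoNonNilpotent K) (hH : H < K) : Group.IsNilpotent H := by
  by_contra hn
  rcases h.2.2.2 H hn with rfl | rfl
  · exact not_top_lt hH
  · exact lt_irrefl _ hH

/-- If `G` has exactly two non-nilpotent subgroups `G` and `K` with `G' < K`, then `G/G''`
has exactly two non-nilpotent subgroups, namely `G/G''` and `K/G''`. -/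
theorem stmt4 {G : Type*} [Group G] (K : Subgroup G) (h : ExactlyTwoNonNilpotent K)
    (hK : commutator G < K) :
    ExactlyTwoNonNilpotent (K.map (QuotientGroup.mk' (derivedSeries G 2))) := by
  have hG'_nil : Group.IsNilpotent (commutator G) := h.isNilpotent_of_lt hK
  obtain ⟨-, hK_lt_top, hK_not_nil, hG⟩ := h
  -- `derivedSeries G 2` unfolds to `⁅commutator G, commutator G⁆`
  have hG''_le : derivedSeries G 2 ≤ K := (Subgroup.commutator_le_left _ _).trans hK.le
  have hK_quot : ¬ Group.IsNilpotent (K.map (QuotientGroup.mk' (derivedSeries G 2))) :=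
    fun hnil => hK_not_nil (Subgroup.isNilpotent_of_isNilpotent_map hK.le hG'_nil hnil)
  refine ⟨fun _ => hK_quot inferInstance, ?_, hK_quot, fun _ =>
    Subgroup.eq_top_or_eq_map_of_not_isNilpotent (QuotientGroup.mk'_surjective _) hG⟩
  exact Subgroup.map_lt_top_of_ker_le hK_lt_top ((QuotientGroup.ker_mk' _).le.trans hG''_le)
end

section
/- Let G be a group with exactly two non-nilpotent subgroups G and K, where K is not finitely generated. Then G is locally nilpotent; in particular every maximal subgroup of G is normal and of prime index. -/
open Subgroup
open scoped commutatorElement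

def IsLocallyNilpotent (G : Type*) [Group G] : Prop :=
  ∀ H : Subgroup G, H.FG → Group.IsNilpotent H

section Nilpotent

variable {F : Type*} [Group F]

theorem commutatorElement_mul_mem_center {z w : F} (hz : z ∈ center F) (hw : w ∈ center F)
    (x y : F) : ⁅x * z, y * w⁆ = ⁅x, y⁆ := by
  have hz1 : ⁅z, y * w⁆ = 1 :=
    commutatorElement_eq_one_iff_mul_comm.2 (mem_center_iff.1 hz _).symm
  have hw1 : ⁅x, w⁆ = 1 := commutatorElement_eq_one_iff_mul_comm.2 (mem_center_iff.1 hw _)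
  rw [commutatorElement_mul_left_eq_conj_mul, hz1, commutatorElement_mul_right_eq_mul_conj, hw1]
  group

theorem commutator_le_of_sup_center_eq_top {T : Subgroup F} (h : T ⊔ center F = ⊤) :
    commutator F ≤ T := by
  rw [commutator_def, commutator_le]
  intro a ha b hb
  rw [← h, mem_sup_of_normal_right] at ha hb
  obtain ⟨x, hx, z, hz, rfl⟩ := ha
  obtain ⟨y, hy, w, hw, rfl⟩ := hb
  rw [commutatorElement_mul_mem_center hz hw, commutatorElement_def]
  exact mul_mem (mul_mem (mul_mem hx hy) (inv_mem hx)) (inv_mem hy)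

theorem eq_top_of_sup_commutator_eq_top [Group.IsNilpotent F] (T : Subgroup F)
    (h : T ⊔ commutator F = ⊤) : T = ⊤ := by
  revert T
  refine Group.nilpotent_center_quotient_ind (P := fun F _ _ ↦ ∀ T : Subgroup F,
    T ⊔ commutator F = ⊤ → T = ⊤) F (fun F _ _ T _ ↦ Subsingleton.elim T ⊤) ?_
  intro F _ _ ih T h
  have hπ := QuotientGroup.mk'_surjective (center F)
  have hcomm :
      (commutator F).map (QuotientGroup.mk' (center F)) = commutator (F ⧸ center F) := by
    rw [map_commutator_eq, MonoidHom.range_eq_top.mpr hπ, commutator_def]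
  have hmap : T.map (QuotientGroup.mk' (center F)) = ⊤ := by
    refine ih _ ?_
    rw [← hcomm, ← Subgroup.map_sup, h, map_top_of_surjective _ hπ]
  have hTZ : T ⊔ center F = ⊤ := by
    rw [sup_comm, ← QuotientGroup.comap_map_mk', hmap, comap_top]
  rwa [sup_eq_left.mpr (commutator_le_of_sup_center_eq_top hTZ)] at h

theorem Subgroup.eq_of_sup_commutator_eq {H T : Subgroup F} [Group.IsNilpotent H] (hTH : T ≤ H)
    (h : T ⊔ ⁅H, H⁆ = H) : T = H := by
  have hT : T.subgroupOf H ⊔ _root_.commutator H = ⊤ := by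
    apply map_injective H.subtype_injective
    rw [Subgroup.map_sup, subgroupOf_map_subtype, map_subtype_commutator,
      ← MonoidHom.range_eq_map, range_subtype, inf_of_le_left hTH, h]
  exact le_antisymm hTH (subgroupOf_eq_top.mp (eq_top_of_sup_commutator_eq_top _ hT))

end Nilpotent

section LocallyNilpotent

variable {G : Type*} [Group G]

theorem Subgroup.exists_finite_subset_of_mem_closure {s : Set G} {x : G} (hx : x ∈ closure s) :
    ∃ t ⊆ s, t.Finite ∧ x ∈ closure t := by
  induction hx using closure_induction with
  | mem x hx => exact ⟨{x}, Set.singleton_subset_iff.mpr hx, Set.finite_singleton x,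
      subset_closure rfl⟩
  | one => exact ⟨∅, Set.empty_subset _, Set.finite_empty, one_mem _⟩
  | mul x y _ _ hx hy =>
    obtain ⟨t, hts, htf, hx⟩ := hx
    obtain ⟨u, hus, huf, hy⟩ := hy
    exact ⟨t ∪ u, Set.union_subset hts hus, htf.union huf,
      mul_mem (closure_mono Set.subset_union_left hx) (closure_mono Set.subset_union_right hy)⟩
  | inv x _ hx =>
    obtain ⟨t, hts, htf, hx⟩ := hx
    exact ⟨t, hts, htf, inv_mem hx⟩

/-- If `⁅a, b⁆ ∉ M`, then `a` and `b` lie in a subgroup `F` generated by `⁅a, b⁆` and finitely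
many elements of `M`; `F` is nilpotent and `(M ⊓ F) ⊔ ⁅F, F⁆ = F`, so `F ≤ M`. -/
theorem IsLocallyNilpotent.commutator_le_of_isCoatom (hG : IsLocallyNilpotent G)
    {M : Subgroup G} (hM : IsCoatom M) : commutator G ≤ M := by
  rw [commutator_def, commutator_le]
  intro a _ b _
  by_contra hc
  have hgen : closure (insert ⁅a, b⁆ (M : Set G)) = ⊤ := by
    refine hM.2 _ (SetLike.lt_iff_le_and_exists.mpr
      ⟨fun x hx ↦ subset_closure (Set.mem_insert_of_mem _ hx), ⁅a, b⁆,
        subset_closure (Set.mem_insert _ _), hc⟩)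
  obtain ⟨s, hs, hsfin, has⟩ := exists_finite_subset_of_mem_closure (hgen ▸ mem_top a)
  obtain ⟨t, ht, htfin, hbt⟩ := exists_finite_subset_of_mem_closure (hgen ▸ mem_top b)
  set F := closure (insert ⁅a, b⁆ (s ∪ t))
  have hcF : ⁅a, b⁆ ∈ ⁅F, F⁆ := commutator_mem_commutator
    (closure_mono (Set.subset_union_left.trans (Set.subset_insert _ _)) has)
    (closure_mono (Set.subset_union_right.trans (Set.subset_insert _ _)) hbt)
  have : Group.IsNilpotent F :=
    hG F ((fg_iff F).mpr ⟨_, rfl, (hsfin.union htfin).insert _⟩)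
  have hFM : M ⊓ F = F := by
    refine eq_of_sup_commutator_eq inf_le_right
      (le_antisymm (sup_le inf_le_right (commutator_le_self F)) ((closure_le _).mpr ?_))
    rintro y (rfl | hy)
    · exact mem_sup_right hcF
    · rcases Set.union_subset hs ht hy with rfl | hyM
      · exact mem_sup_right hcF
      · exact mem_sup_left ⟨hyM, subset_closure (Set.mem_insert_of_mem _ hy)⟩
  exact hc (hFM.symm ▸ subset_closure (Set.mem_insert _ _) : ⁅a, b⁆ ∈ M ⊓ F).1

end LocallyNilpotent

section PrimeIndex

theorem prime_card_of_isSimpleOrder_subgroup {Q : Type*} [Group Q]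
    [IsSimpleOrder (Subgroup Q)] : (Nat.card Q).Prime := by
  have : Nontrivial Q := nontrivial_iff.mp inferInstance
  obtain ⟨g, hg⟩ := exists_ne (1 : Q)
  have hgen : zpowers g = ⊤ := (eq_bot_or_eq_top _).resolve_left (zpowers_ne_bot.mpr hg)
  have : IsCyclic Q := ⟨g, (eq_top_iff' _).mp hgen⟩
  have : IsSimpleGroup Q := ⟨fun H _ ↦ eq_bot_or_eq_top H⟩
  exact Group.is_simple_iff_prime_card.mp this

theorem Subgroup.Normal.index_prime_of_isCoatom {G : Type*} [Group G] {N : Subgroup G}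
    (hN : N.Normal) (hco : IsCoatom N) : N.index.Prime := by
  have : IsSimpleOrder (Subgroup (G ⧸ N)) := (show Subgroup (G ⧸ N) ≃o Set.Ici N from
    QuotientGroup.comapMk'OrderIso N).isSimpleOrder_iff.mpr
    (Set.isSimpleOrder_Ici_iff_isCoatom.mpr hco)
  rw [index_eq_card]
  exact prime_card_of_isSimpleOrder_subgroup

end PrimeIndex

namespace ExactlyTwoNonNilpotent

variable {G : Type*} [Group G] {K : Subgroup G}

theorem characteristic (h : ExactlyTwoNonNilpotent K) : K.Characteristic := by
  obtain ⟨-, hKlt, hK, hmax⟩ := h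
  refine characteristic_iff_map_eq.mpr fun ϕ ↦ ?_
  have hϕK : ¬ Group.IsNilpotent (K.map ϕ.toMonoidHom) := fun _ ↦
    hK (Group.nilpotent_of_mulEquiv (K.equivMapOfInjective ϕ.toMonoidHom ϕ.injective).symm)
  refine (hmax _ hϕK).resolve_left fun htop ↦ hKlt.ne ?_
  rw [← comap_map_eq_self_of_injective (f := ϕ.toMonoidHom) ϕ.injective K, htop, comap_top]

theorem isCoatom (h : ExactlyTwoNonNilpotent K) : IsCoatom K :=
  ⟨h.2.1.ne, fun H hKH ↦ (h.2.2.2 H fun _ ↦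
    h.2.2.1 (Group.nilpotent_of_mulEquiv (subgroupOfEquivOfLe hKH.le))).resolve_right hKH.ne'⟩

theorem isLocallyNilpotent (h : ExactlyTwoNonNilpotent K) (hK : ¬ K.FG) :
    IsLocallyNilpotent G := by
  intro H hH
  by_contra hnil
  obtain rfl | rfl := h.2.2.2 H hnil
  · have : Group.FG G := Group.fg_def.mpr hH
    have : K.Characteristic := h.characteristic
    have : K.FiniteIndex :=
      ⟨((inferInstance : K.Normal).index_prime_of_isCoatom h.isCoatom).ne_zero⟩
    exact hK ((Group.fg_iff_subgroup_fg K).mp (fg_of_index_ne_zero K))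
  · exact hK hH

end ExactlyTwoNonNilpotent

/-- If `G` has exactly two non-nilpotent subgroups `G` and `K` and `K` is not finitely
generated, then `G` is locally nilpotent; in particular every maximal subgroup of `G` is
normal of prime index. -/
theorem stmt7 {G : Type*} [Group G] (K : Subgroup G) (h : ExactlyTwoNonNilpotent K)
    (hfg : ¬ K.FG) :
    (∀ H : Subgroup G, H.FG → Group.IsNilpotent ↥H) ∧
      ∀ M : Subgroup G, IsCoatom M → M.Normal ∧ ∃ p : ℕ, p.Prime ∧ M.index = p := by
  have hG := h.isLocallyNilpotent hfg
  refine ⟨hG, fun M hM ↦ ?_⟩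
  have hM' := Normal.of_commutator_le _ (hG.commutator_le_of_isCoatom hM)
  exact ⟨hM', _, hM'.index_prime_of_isCoatom hM, rfl⟩
end
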